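/- Let M ⊆ F be a graded A-module generated by homogeneous elements f_1,…,f_r. Let A^s →^Φ A^r → F be a graded presentation of N := ⟨in_{(ω,ε)}(f_1),…,in_{(ω,ε)}(f_r)⟩ with Φ(A^s) generated in degrees ≤ d. If N and in_{(ω,ε)}(M) agree in all degrees ≤ d, then N = in_{(ω,ε)}(M). -/

import Mathlib

/-!  Basic setup: the polynomial ring `A = K[X_1,…,X_n]`, a graded free module
`F = ⊕_{j} A(-d_j)` realized as `Fin k → A`, weight orders `(ω, ε)`, initial
modules, Hilbert functions, graded free resolutions, Betti numbers,
regularity and componentwise notions, following Caviglia–Varbaro,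
"Componentwise regularity (I)". -/

namespace CregPaper

abbrev A (K : Type*) [Field K] (n : ℕ) := MvPolynomial (Fin n) K

variable {K : Type*} [Field K] {n k : ℕ}

/-- `(ω)`-weight of an exponent vector `u`. -/
def wdeg (ω : Fin n → ℕ) (u : Fin n →₀ ℕ) : ℕ := u.sum fun i e => ω i * e

/-- total (standard) degree of an exponent vector `u`. -/
def tdeg (u : Fin n →₀ ℕ) : ℕ := u.sum fun _ e => e

/-- largest `(ω,ε)`-weight of a monomial in the support of `f ∈ F`. -/
noncomputable def maxWt (ω : Fin n → ℕ) (ε : Fin k → ℕ) (f : Fin k → A K n) : ℕ :=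
  Finset.univ.sup fun j => (f j).support.sup fun u => wdeg ω u + ε j

/-- the initial part `in_{(ω,ε)}(f)`: the sum of the terms of `f` of largest weight. -/
noncomputable def inForm (ω : Fin n → ℕ) (ε : Fin k → ℕ) (f : Fin k → A K n) :
    Fin k → A K n :=
  fun j => ∑ u ∈ (f j).support.filter fun u => wdeg ω u + ε j = maxWt ω ε f,
    MvPolynomial.monomial u ((f j).coeff u)

/-- the initial module `in_{(ω,ε)}(M)`. -/
noncomputable def inMod (ω : Fin n → ℕ) (ε : Fin k → ℕ)
    (M : Submodule (A K n) (Fin k → A K n)) : Submodule (A K n) (Fin k → A K n) :=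
  Submodule.span (A K n) {g | ∃ f ∈ M, f ≠ 0 ∧ g = inForm ω ε f}

/-- `f ∈ F = ⊕_j A(-d_j)` is homogeneous of (standard) degree `a`. -/
def IsHomog (d : Fin k → ℕ) (a : ℕ) (f : Fin k → A K n) : Prop :=
  ∀ j, ∀ u ∈ (f j).support, tdeg u + d j = a

/-- the `K`-subspace of `F` of homogeneous elements of degree `a`. -/
noncomputable def homogSub (d : Fin k → ℕ) (a : ℕ) : Submodule K (Fin k → A K n) where
  carrier := {f | IsHomog d a f}
  add_mem' := by
    intro f g hf hg j u hu
    rcases Finset.mem_union.mp (MvPolynomial.support_add hu) with h | h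
    · exact hf j u h
    · exact hg j u h
  zero_mem' := by intro j u hu; simp at hu
  smul_mem' := by
    intro c f hf j u hu
    exact hf j u (MvPolynomial.support_smul hu)

/-- the degree-`a` homogeneous component of `f ∈ F`. -/
noncomputable def homogComp (d : Fin k → ℕ) (f : Fin k → A K n) (a : ℕ) : Fin k → A K n :=
  fun j => ∑ u ∈ (f j).support.filter fun u => tdeg u + d j = a,
    MvPolynomial.monomial u ((f j).coeff u)

/-- `M ⊆ F` is a graded submodule. -/
def IsGradedSub (d : Fin k → ℕ) (M : Submodule (A K n) (Fin k → A K n)) : Prop :=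
  ∀ f ∈ M, ∀ a, homogComp d f a ∈ M

/-- Hilbert function of `M ⊆ F` in degree `a`. -/
noncomputable def hilb (d : Fin k → ℕ) (M : Submodule (A K n) (Fin k → A K n)) (a : ℕ) : ℕ :=
  Module.finrank K ↥(Submodule.restrictScalars K M ⊓ homogSub d a)

/-- the homogeneous maximal ideal `m = (X_1,…,X_n)` of `A`. -/
noncomputable def mIdeal (K : Type*) [Field K] (n : ℕ) : Ideal (A K n) :=
  RingHom.ker (MvPolynomial.constantCoeff : A K n →+* K)

/-- graded Betti number `β_{0,a}(M) = dim_K (M/mM)_a`, the number of minimal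
generators of the graded module `M` in degree `a`. -/
noncomputable def beta0 (d : Fin k → ℕ) (M : Submodule (A K n) (Fin k → A K n)) (a : ℕ) : ℕ :=
  hilb d M a - hilb d (mIdeal K n • M) a

/-- A graded free resolution of a graded submodule `M` of `F = ⊕_j A(-d_j)`:
`⋯ → A^{rk 1} → A^{rk 0} → M → 0`, each free module coming with degree shifts
`sh i`, all maps graded of degree `0`. -/
structure GFRes (d : Fin k → ℕ) (M : Submodule (A K n) (Fin k → A K n)) where
  rk : ℕ → ℕ
  sh : (i : ℕ) → Fin (rk i) → ℕ
  aug : (Fin (rk 0) → A K n) →ₗ[A K n] (Fin k → A K n)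
  diff : (i : ℕ) → ((Fin (rk (i+1)) → A K n) →ₗ[A K n] (Fin (rk i) → A K n))
  aug_range : LinearMap.range aug = M
  aug_hom : ∀ l, IsHomog d (sh 0 l) (aug (Pi.single l 1))
  diff_hom : ∀ i l, IsHomog (sh i) (sh (i+1) l) (diff i (Pi.single l 1))
  ex0 : LinearMap.range (diff 0) = LinearMap.ker aug
  exs : ∀ i, LinearMap.range (diff (i+1)) = LinearMap.ker (diff i)

/-- minimality of a graded free resolution: all entries of the differential
matrices lie in the maximal ideal. -/
def GFRes.Minimal {d : Fin k → ℕ} {M : Submodule (A K n) (Fin k → A K n)}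
    (res : GFRes d M) : Prop :=
  ∀ i x l, res.diff i x l ∈ mIdeal K n

/-- the graded Betti number `β_{i,j}(M)` read off from a (minimal) resolution. -/
noncomputable def GFRes.betti {d : Fin k → ℕ} {M : Submodule (A K n) (Fin k → A K n)}
    (res : GFRes d M) (i j : ℕ) : ℕ :=
  (Finset.univ.filter fun l => res.sh i l = j).card

/-- `reg_A(M) ≤ r`: there is a minimal graded free resolution of `M` with
all shifts in homological degree `i` bounded by `i + r`. -/
def RegLE (d : Fin k → ℕ) (M : Submodule (A K n) (Fin k → A K n)) (r : ℕ) : Prop :=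
  ∃ res : GFRes d M, res.Minimal ∧ ∀ i l, res.sh i l ≤ i + r

/-- `M_{⟨a⟩}`: the submodule generated by the homogeneous elements of degree `a` of `M`. -/
noncomputable def compSub (d : Fin k → ℕ) (M : Submodule (A K n) (Fin k → A K n)) (a : ℕ) :
    Submodule (A K n) (Fin k → A K n) :=
  Submodule.span (A K n) {f | f ∈ M ∧ IsHomog d a f}

/-- `M` is `r`-componentwise regular: `reg (M_{⟨a⟩}) ≤ a + r` for all `a`. -/
def CWRegLE (d : Fin k → ℕ) (M : Submodule (A K n) (Fin k → A K n)) (r : ℕ) : Prop :=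
  ∀ a, RegLE d (compSub d M a) (a + r)

/-- `M` is componentwise linear: each `M_{⟨a⟩}` is zero or has regularity `a`. -/
def CompLinear (d : Fin k → ℕ) (M : Submodule (A K n) (Fin k → A K n)) : Prop :=
  ∀ a, compSub d M a = ⊥ ∨ RegLE d (compSub d M a) a

/-- `M` is generated in degrees `≤ a`. -/
def GenInDegLE (d : Fin k → ℕ) (M : Submodule (A K n) (Fin k → A K n)) (a : ℕ) : Prop :=
  M ≤ Submodule.span (A K n) {f | f ∈ M ∧ ∃ b ≤ a, IsHomog d b f}

end CregPaper
/-!  The flat family: `Ã = A[t]` with `deg X_i = (1, w_i)`, `deg t = (0,1)`,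
homogenization of elements and modules with respect to `(ω,ε)`, saturation
with respect to `t`, and specializations `t = α`. -/

namespace CregPaper

variable {K : Type*} [Field K] {n k : ℕ}

abbrev At (K : Type*) [Field K] (n : ℕ) := Polynomial (A K n)

/-- the `(ω,ε)`-homogenization `f̃ ∈ F̃` of `f ∈ F`. -/
noncomputable def homogenize (ω : Fin n → ℕ) (ε : Fin k → ℕ) (f : Fin k → A K n) :
    Fin k → At K n :=
  fun j => ∑ u ∈ (f j).support,
    Polynomial.monomial (maxWt ω ε f - (wdeg ω u + ε j))
      (MvPolynomial.monomial u ((f j).coeff u))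

/-- the homogenization `M̃ ⊆ F̃` of a submodule `M ⊆ F`. -/
noncomputable def Mtilde (ω : Fin n → ℕ) (ε : Fin k → ℕ)
    (M : Submodule (A K n) (Fin k → A K n)) : Submodule (At K n) (Fin k → At K n) :=
  Submodule.span (At K n) {g | ∃ f ∈ M, g = homogenize ω ε f}

/-- saturation `N : t^∞` of a submodule `N ⊆ F̃`. -/
noncomputable def tsat (N : Submodule (At K n) (Fin k → At K n)) :
    Submodule (At K n) (Fin k → At K n) where
  carrier := {x | ∃ e : ℕ, ((Polynomial.X : At K n) ^ e) • x ∈ N}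
  add_mem' := by
    rintro x y ⟨e, he⟩ ⟨e', he'⟩
    refine ⟨e + e', ?_⟩
    rw [smul_add]
    refine Submodule.add_mem _ ?_ ?_
    · rw [pow_add, mul_comm, mul_smul]; exact Submodule.smul_mem _ _ he
    · rw [pow_add, mul_smul]; exact Submodule.smul_mem _ _ he'
  zero_mem' := ⟨0, by simp⟩
  smul_mem' := by
    rintro c x ⟨e, he⟩
    exact ⟨e, by rw [smul_comm]; exact Submodule.smul_mem _ _ he⟩

/-- image in `F` of a submodule `N ⊆ F̃` under the evaluation `t ↦ α`. -/
noncomputable def evalSub (α : K) (N : Submodule (At K n) (Fin k → At K n)) :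
    Submodule (A K n) (Fin k → A K n) :=
  Submodule.span (A K n)
    ((fun g : Fin k → At K n => fun j => Polynomial.eval (algebraMap K (A K n) α) (g j)) '' N)

/-- the linear map `R^r → M` sending the standard basis to `v`. -/
noncomputable def combo {R : Type*} [CommRing R] {M : Type*} [AddCommGroup M] [Module R M]
    {r : ℕ} (v : Fin r → M) : (Fin r → R) →ₗ[R] M where
  toFun x := ∑ i, x i • v i
  map_add' x y := by simp [add_smul, Finset.sum_add_distrib]
  map_smul' c x := by simp [mul_smul, Finset.smul_sum]

end CregPaper

namespace CregPaper


/-! ### Auxiliary machinery for the proof of Statement 7 -/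

section InitialAgreementAux

open scoped Classical

variable {K : Type*} [Field K] {n : ℕ}

/-- selection of the terms of `p` whose exponent satisfies `P`. -/
noncomputable def sel (P : (Fin n →₀ ℕ) → Prop) (p : A K n) : A K n :=
  ∑ u ∈ p.support.filter P, MvPolynomial.monomial u (p.coeff u)

lemma coeff_sel (P : (Fin n →₀ ℕ) → Prop) (p : A K n) (u : Fin n →₀ ℕ) :
    (sel P p).coeff u = if P u then p.coeff u else 0 := by
  classical
  rw [sel, MvPolynomial.coeff_sum]
  simp only [MvPolynomial.coeff_monomial]
  rw [Finset.sum_ite_eq' (p.support.filter P) u p.coeff]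
  simp only [Finset.mem_filter, MvPolynomial.mem_support_iff]
  split_ifs with h1 h2 h2 <;> tauto

lemma support_sel {P : (Fin n →₀ ℕ) → Prop} {p : A K n} {u : Fin n →₀ ℕ}
    (hu : u ∈ (sel P p).support) : u ∈ p.support ∧ P u := by
  rw [MvPolynomial.mem_support_iff, coeff_sel] at hu
  by_cases h : P u
  · simpa [h, MvPolynomial.mem_support_iff] using And.intro hu h
  · simp [h] at hu

lemma sel_eq_self {P : (Fin n →₀ ℕ) → Prop} {p : A K n}
    (h : ∀ u ∈ p.support, P u) : sel P p = p := by
  ext u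
  rw [coeff_sel]
  by_cases hu : p.coeff u = 0
  · simp [hu]
  · rw [if_pos (h u (MvPolynomial.mem_support_iff.2 hu))]

@[simp] lemma sel_zero (P : (Fin n →₀ ℕ) → Prop) : sel P (0 : A K n) = 0 := by
  ext u; rw [coeff_sel]; simp

lemma sel_add (P : (Fin n →₀ ℕ) → Prop) (p q : A K n) :
    sel P (p + q) = sel P p + sel P q := by
  ext u
  simp only [coeff_sel, MvPolynomial.coeff_add]
  split_ifs <;> simp

lemma sel_sum (P : (Fin n →₀ ℕ) → Prop) {ι : Type*} (s : Finset ι) (g : ι → A K n) :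
    sel P (∑ i ∈ s, g i) = ∑ i ∈ s, sel P (g i) := by
  classical
  induction s using Finset.induction_on with
  | empty => simp
  | insert _ _ h ih => rw [Finset.sum_insert h, Finset.sum_insert h, sel_add, ih]

lemma wdeg_add (ω : Fin n → ℕ) (a b : Fin n →₀ ℕ) :
    wdeg ω (a + b) = wdeg ω a + wdeg ω b := by
  unfold wdeg
  rw [Finsupp.sum_add_index] <;> simp [mul_add]

lemma tdeg_add (a b : Fin n →₀ ℕ) : tdeg (a + b) = tdeg a + tdeg b := by
  unfold tdeg
  rw [Finsupp.sum_add_index] <;> simp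

/-- Key product lemma: selecting degree `τ` (with shift `η`) from `p * q` when `q`
is homogeneous of degree `δ` (with shift `η`). -/
lemma sel_mul_homog {NN : Type*} [AddCommMonoid NN] (D : (Fin n →₀ ℕ) → NN)
    (hD : ∀ a b, D (a + b) = D a + D b) (η δ τ : NN) (p q : A K n)
    (hq : ∀ b ∈ q.support, D b + η = δ) :
    sel (fun v => D v + η = τ) (p * q) = sel (fun a => D a + δ = τ) p * q := by
  classical
  ext v
  rw [coeff_sel, MvPolynomial.coeff_mul, MvPolynomial.coeff_mul]
  have : ∀ x ∈ Finset.HasAntidiagonal.antidiagonal v,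
      (if D v + η = τ then p.coeff x.1 * q.coeff x.2 else 0)
        = (sel (fun a => D a + δ = τ) p).coeff x.1 * q.coeff x.2 := by
    rintro ⟨a, b⟩ hab
    rw [Finset.HasAntidiagonal.mem_antidiagonal] at hab
    rw [coeff_sel]
    by_cases hb : q.coeff b = 0
    · simp [hb]
    by_cases ha : p.coeff a = 0
    · simp [ha]
    have hDb : D b + η = δ := hq b (MvPolynomial.mem_support_iff.2 hb)
    have : (D v + η = τ) = (D a + δ = τ) := by
      subst hab
      rw [hD, ← hDb, add_assoc]
    rw [this]
    split_ifs <;> simp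
  rw [← Finset.sum_congr rfl this]
  split_ifs <;> simp

/-- Selecting the top degree from a product of bounded factors. -/
lemma sel_mul_top (D : (Fin n →₀ ℕ) → ℕ)
    (hD : ∀ a b, D (a + b) = D a + D b) (η β τ : ℕ) (p q : A K n)
    (hp : ∀ a ∈ p.support, D a + β ≤ τ) (hq : ∀ b ∈ q.support, D b + η ≤ β) :
    sel (fun v => D v + η = τ) (p * q)
      = sel (fun a => D a + β = τ) p * sel (fun b => D b + η = β) q := by
  classical
  ext v
  rw [coeff_sel, MvPolynomial.coeff_mul, MvPolynomial.coeff_mul]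
  have : ∀ x ∈ Finset.HasAntidiagonal.antidiagonal v,
      (if D v + η = τ then p.coeff x.1 * q.coeff x.2 else 0)
        = (sel (fun a => D a + β = τ) p).coeff x.1
            * (sel (fun b => D b + η = β) q).coeff x.2 := by
    rintro ⟨a, b⟩ hab
    rw [Finset.HasAntidiagonal.mem_antidiagonal] at hab
    rw [coeff_sel, coeff_sel]
    by_cases hb : q.coeff b = 0
    · simp [hb]
    by_cases ha : p.coeff a = 0
    · simp [ha]
    have h1 : D a + β ≤ τ := hp a (MvPolynomial.mem_support_iff.2 ha)
    have h2 : D b + η ≤ β := hq b (MvPolynomial.mem_support_iff.2 hb)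
    have hv : D v = D a + D b := by rw [← hab, hD]
    by_cases hc : D v + η = τ
    · have e1 : D a + β = τ := by omega
      have e2 : D b + η = β := by omega
      rw [if_pos hc, if_pos e1, if_pos e2]
    · have : ¬ (D a + β = τ ∧ D b + η = β) := by
        intro ⟨e1, e2⟩; omega
      rw [if_neg hc]
      by_cases e1 : D a + β = τ
      · rw [if_pos e1, if_neg (by tauto), mul_zero]
      · rw [if_neg e1, zero_mul]
  rw [← Finset.sum_congr rfl this]
  split_ifs <;> simp

/-- selection on a vector of polynomials, with shifts `E`. -/
noncomputable def selV {NN : Type*} [AddCommMonoid NN] (D : (Fin n →₀ ℕ) → NN)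
    {m : ℕ} (E : Fin m → NN) (τ : NN) (v : Fin m → A K n) : Fin m → A K n :=
  fun j => sel (fun u => D u + E j = τ) (v j)

variable {NN : Type*} [AddCommMonoid NN] {D : (Fin n →₀ ℕ) → NN} {m : ℕ}
  {E : Fin m → NN} {τ : NN}

lemma support_selV {v : Fin m → A K n} {j : Fin m} {u : Fin n →₀ ℕ}
    (hu : u ∈ (selV D E τ v j).support) : u ∈ (v j).support ∧ D u + E j = τ :=
  support_sel hu

lemma selV_eq_self {v : Fin m → A K n}
    (h : ∀ j, ∀ u ∈ (v j).support, D u + E j = τ) : selV D E τ v = v :=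
  funext fun j => sel_eq_self (h j)

@[simp] lemma selV_zero : selV D E τ (0 : Fin m → A K n) = 0 :=
  funext fun _ => sel_zero _

lemma selV_sum {ι : Type*} (s : Finset ι) (g : ι → Fin m → A K n) :
    selV D E τ (∑ i ∈ s, g i) = ∑ i ∈ s, selV D E τ (g i) := by
  funext j
  show sel (fun u => D u + E j = τ) ((∑ i ∈ s, g i) j) = (∑ i ∈ s, selV D E τ (g i)) j
  rw [Finset.sum_apply, Finset.sum_apply, sel_sum]
  rfl

lemma selV_smul_homog (hD : ∀ a b, D (a + b) = D a + D b) (δ : NN)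
    (p : A K n) (q : Fin m → A K n)
    (hq : ∀ j, ∀ u ∈ (q j).support, D u + E j = δ) :
    selV D E τ (p • q) = sel (fun a => D a + δ = τ) p • q := by
  funext j
  show sel (fun u => D u + E j = τ) (p * q j) = sel (fun a => D a + δ = τ) p * q j
  exact sel_mul_homog D hD (E j) δ τ p (q j) (hq j)

lemma selV_smul_top (ω : Fin n → ℕ) {m : ℕ} (E : Fin m → ℕ) (β τ : ℕ) (p : A K n)
    (q : Fin m → A K n) (hp : ∀ a ∈ p.support, wdeg ω a + β ≤ τ)
    (hq : ∀ j, ∀ u ∈ (q j).support, wdeg ω u + E j ≤ β) :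
    selV (wdeg ω) E τ (p • q)
      = sel (fun a => wdeg ω a + β = τ) p • selV (wdeg ω) E β q := by
  funext j
  show sel _ (p * q j) = sel (fun a => wdeg ω a + β = τ) p * sel _ (q j)
  exact sel_mul_top (wdeg ω) (wdeg_add ω) (E j) β τ p (q j) hp (hq j)

variable {k : ℕ}

lemma wt_le_maxWt (ω : Fin n → ℕ) (ε : Fin k → ℕ) (g : Fin k → A K n) {j : Fin k}
    {u : Fin n →₀ ℕ} (hu : u ∈ (g j).support) : wdeg ω u + ε j ≤ maxWt ω ε g := by
  refine le_trans (Finset.le_sup (f := fun u => wdeg ω u + ε j) hu) ?_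
  exact Finset.le_sup (f := fun j => (g j).support.sup fun u => wdeg ω u + ε j)
    (Finset.mem_univ j)

lemma maxWt_le {ω : Fin n → ℕ} {ε : Fin k → ℕ} {g : Fin k → A K n} {W : ℕ}
    (h : ∀ j, ∀ u ∈ (g j).support, wdeg ω u + ε j ≤ W) : maxWt ω ε g ≤ W :=
  Finset.sup_le fun j _ => Finset.sup_le fun u hu => h j u hu

@[simp] lemma inForm_zero (ω : Fin n → ℕ) (ε : Fin k → ℕ) :
    inForm ω ε (0 : Fin k → A K n) = 0 := by
  funext j
  simp [inForm]

lemma coeff_inForm (ω : Fin n → ℕ) (ε : Fin k → ℕ) (g : Fin k → A K n) (j : Fin k)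
    (u : Fin n →₀ ℕ) :
    (inForm ω ε g j).coeff u
      = if wdeg ω u + ε j = maxWt ω ε g then (g j).coeff u else 0 := by
  classical
  simp only [inForm, MvPolynomial.coeff_sum, MvPolynomial.coeff_monomial]
  rw [Finset.sum_ite_eq' (Finset.filter _ (g j).support) u (g j).coeff]
  simp only [Finset.mem_filter, MvPolynomial.mem_support_iff]
  split_ifs with h1 h2 h2 <;> tauto

lemma inForm_eq_selV (ω : Fin n → ℕ) (ε : Fin k → ℕ) (g : Fin k → A K n) :
    inForm ω ε g = selV (wdeg ω) ε (maxWt ω ε g) g := by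
  funext j
  ext u
  rw [coeff_inForm]
  show _ = (sel (fun u => wdeg ω u + ε j = maxWt ω ε g) (g j)).coeff u
  rw [coeff_sel]
  split_ifs <;> rfl

lemma support_inForm {ω : Fin n → ℕ} {ε : Fin k → ℕ} {g : Fin k → A K n} {j : Fin k}
    {u : Fin n →₀ ℕ} (hu : u ∈ (inForm ω ε g j).support) :
    u ∈ (g j).support ∧ wdeg ω u + ε j = maxWt ω ε g := by
  rw [inForm_eq_selV] at hu
  exact support_sel hu

lemma support_sub_inForm {ω : Fin n → ℕ} {ε : Fin k → ℕ} {g : Fin k → A K n} {j : Fin k}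
    {u : Fin n →₀ ℕ} (hu : u ∈ ((g - inForm ω ε g) j).support) :
    u ∈ (g j).support ∧ wdeg ω u + ε j < maxWt ω ε g := by
  have hu' : (g j).coeff u - (inForm ω ε g j).coeff u ≠ 0 := by
    simpa [MvPolynomial.mem_support_iff, MvPolynomial.coeff_sub] using hu
  rw [coeff_inForm] at hu'
  by_cases h : wdeg ω u + ε j = maxWt ω ε g
  · rw [if_pos h] at hu'; simp at hu'
  · rw [if_neg h, sub_zero] at hu'
    have hmem : u ∈ (g j).support := MvPolynomial.mem_support_iff.2 hu'
    exact ⟨hmem, lt_of_le_of_ne (wt_le_maxWt ω ε g hmem) h⟩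

lemma exists_add_of_mem_support_mul {p q : A K n} {v : Fin n →₀ ℕ}
    (h : v ∈ (p * q).support) :
    ∃ a ∈ p.support, ∃ b ∈ q.support, a + b = v := by
  classical
  have := MvPolynomial.support_mul p q h
  rwa [Finset.mem_add] at this

lemma mem_support_sum {ι : Type*} {s : Finset ι} {x : ι → A K n} {u : Fin n →₀ ℕ}
    (h : u ∈ (∑ i ∈ s, x i).support) : ∃ i ∈ s, u ∈ (x i).support := by
  by_contra hc
  push_neg at hc
  rw [MvPolynomial.mem_support_iff, MvPolynomial.coeff_sum] at h
  exact h (Finset.sum_eq_zero fun i hi =>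
    MvPolynomial.notMem_support_iff.1 (hc i hi))

lemma mem_support_sub {p q : A K n} {u : Fin n →₀ ℕ} (h : u ∈ (p - q).support) :
    u ∈ p.support ∨ u ∈ q.support := by
  by_contra hc
  push_neg at hc
  rw [MvPolynomial.mem_support_iff, MvPolynomial.coeff_sub] at h
  rw [MvPolynomial.notMem_support_iff.1 hc.1, MvPolynomial.notMem_support_iff.1 hc.2] at h
  simp at h

lemma mem_support_add {p q : A K n} {u : Fin n →₀ ℕ} (h : u ∈ (p + q).support) :
    u ∈ p.support ∨ u ∈ q.support := by
  by_contra hc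
  push_neg at hc
  rw [MvPolynomial.mem_support_iff, MvPolynomial.coeff_add] at h
  rw [MvPolynomial.notMem_support_iff.1 hc.1, MvPolynomial.notMem_support_iff.1 hc.2] at h
  simp at h

lemma weight_decomp (ω : Fin n → ℕ) {m : ℕ} (E : Fin m → ℕ) (v : Fin m → A K n) :
    ∃ S : Finset ℕ, v = ∑ w ∈ S, selV (wdeg ω) E w v := by
  classical
  refine ⟨Finset.univ.biUnion fun i => (v i).support.image fun a => wdeg ω a + E i, ?_⟩
  funext j
  ext u
  rw [Finset.sum_apply, MvPolynomial.coeff_sum]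
  simp only [selV, coeff_sel]
  by_cases hmem : (wdeg ω u + E j)
      ∈ Finset.univ.biUnion fun i => (v i).support.image fun a => wdeg ω a + E i
  · rw [Finset.sum_eq_single_of_mem (wdeg ω u + E j) hmem, if_pos rfl]
    intro x _ hne
    exact if_neg fun h => hne h.symm
  · have hc : (v j).coeff u = 0 := by
      by_contra hc
      exact hmem (Finset.mem_biUnion.2 ⟨j, Finset.mem_univ j,
        Finset.mem_image.2 ⟨u, MvPolynomial.mem_support_iff.2 hc, rfl⟩⟩)
    rw [hc, Finset.sum_eq_zero]
    intro x hx
    by_cases h : wdeg ω u + E j = x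
    · rw [if_pos h]
    · rw [if_neg h]

end InitialAgreementAux


section MainLemmas

open scoped Classical

lemma mem_homogSub {K : Type*} [Field K] {n k : ℕ} {d : Fin k → ℕ} {a : ℕ}
    {x : Fin k → A K n} : x ∈ homogSub d a ↔ IsHomog d a x := Iff.rfl

/-- Claim B: every homogeneous element of `M` of degree `b ≤ d` admits a
representation `m = ∑ qᵢ fᵢ` in which the weight of every term of `qᵢ fᵢ`
is at most the top weight of `m`. -/
lemma claimB {K : Type*} [Field K] {n k : ℕ} (ω : Fin n → ℕ) (dF ε : Fin k → ℕ) {r : ℕ}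
    (f : Fin r → (Fin k → A K n)) (df : Fin r → ℕ)
    (hf : ∀ i, IsHomog dF (df i) (f i))
    (M : Submodule (A K n) (Fin k → A K n)) (hfM : ∀ i, f i ∈ M) (d : ℕ)
    (hagree : ∀ a ≤ d,
      Submodule.restrictScalars K
          (Submodule.span (A K n) (Set.range fun i => inForm ω ε (f i))) ⊓ homogSub dF a
        = Submodule.restrictScalars K (inMod ω ε M) ⊓ homogSub dF a) :
    ∀ w b, b ≤ d → ∀ m ∈ M, IsHomog dF b m →
      (∀ j, ∀ u ∈ ((m : Fin k → A K n) j).support, wdeg ω u + ε j ≤ w) →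
      ∃ q : Fin r → A K n, (∑ i, q i • f i = m) ∧
        ∀ i, ∀ a ∈ (q i).support, wdeg ω a + maxWt ω ε (f i) ≤ w ∧ tdeg a + df i = b := by
  intro w
  induction w using Nat.strong_induction_on with
  | _ w IH =>
  intro b hb m hm hhom hwt
  by_cases hm0 : m = 0
  · exact ⟨0, by simp [hm0], by simp⟩
  set W₀ := maxWt ω ε m with hW₀
  have hW₀w : W₀ ≤ w := maxWt_le hwt
  have h1 : inForm ω ε m ∈ inMod ω ε M := Submodule.subset_span ⟨m, hm, hm0, rfl⟩
  have h2 : IsHomog dF b (inForm ω ε m) := fun j u hu =>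
    hhom j u (support_inForm hu).1
  have h3 : inForm ω ε m ∈
      Submodule.span (A K n) (Set.range fun i => inForm ω ε (f i)) := by
    have h3' : inForm ω ε m ∈ Submodule.restrictScalars K
        (Submodule.span (A K n) (Set.range fun i => inForm ω ε (f i)))
          ⊓ homogSub dF b := by
      rw [hagree b hb]
      exact Submodule.mem_inf.2 ⟨h1, mem_homogSub.2 h2⟩
    exact (Submodule.mem_inf.1 h3').1
  obtain ⟨p, hp⟩ := (Submodule.mem_span_range_iff_exists_fun (A K n)).1 h3
  -- bigraded selection
  set Dp : (Fin n →₀ ℕ) → ℕ × ℕ := fun u => (tdeg u, wdeg ω u) with hDp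
  have hDadd : ∀ a b, Dp (a + b) = Dp a + Dp b := fun a b => by
    simp [hDp, tdeg_add, wdeg_add, Prod.ext_iff]
  set EF : Fin k → ℕ × ℕ := fun j => (dF j, ε j) with hEF
  set Er : Fin r → ℕ × ℕ := fun i => (df i, maxWt ω ε (f i)) with hEr
  set p' : Fin r → A K n := fun i => sel (fun a => Dp a + Er i = (b, W₀)) (p i) with hp'
  have hfhom : ∀ i j, ∀ u ∈ (inForm ω ε (f i) j).support, Dp u + EF j = Er i := by
    intro i j u hu
    obtain ⟨h4, h5⟩ := support_inForm hu
    have h6 := hf i j u h4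
    simp only [hDp, hEF, hEr, Prod.mk_add_mk, Prod.mk.injEq]
    exact ⟨h6, h5⟩
  have hp'supp : ∀ i, ∀ a ∈ (p' i).support,
      tdeg a + df i = b ∧ wdeg ω a + maxWt ω ε (f i) = W₀ := by
    intro i a ha
    have h7 := (support_sel ha).2
    simp only [hDp, hEr, Prod.mk_add_mk, Prod.mk.injEq] at h7
    exact h7
  have key : ∑ i, p' i • inForm ω ε (f i) = inForm ω ε m := by
    have e1 : selV Dp EF (b, W₀) (∑ i, p i • inForm ω ε (f i))
        = ∑ i, p' i • inForm ω ε (f i) := by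
      rw [selV_sum]
      exact Finset.sum_congr rfl fun i _ =>
        selV_smul_homog hDadd (Er i) (p i) (inForm ω ε (f i)) (hfhom i)
    have e2 : selV Dp EF (b, W₀) (inForm ω ε m) = inForm ω ε m := by
      refine selV_eq_self fun j u hu => ?_
      obtain ⟨hu1, hu2⟩ := support_inForm hu
      simp only [hDp, hEF, Prod.mk_add_mk, Prod.mk.injEq]
      exact ⟨hhom j u hu1, hu2⟩
    rw [← e1, hp, e2]
  set m' : Fin k → A K n := m - ∑ i, p' i • f i with hm'def
  have hm'mem : m' ∈ M :=
    Submodule.sub_mem M hm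
      (Submodule.sum_mem M fun i _ => Submodule.smul_mem M _ (hfM i))
  have hsupp_smul : ∀ (z : Fin r → A K n) i j (u : Fin n →₀ ℕ),
      u ∈ ((z i • f i) j).support →
      ∃ a ∈ (z i).support, ∃ u' ∈ (f i j).support, a + u' = u := by
    intro z i j u hu
    exact exists_add_of_mem_support_mul hu
  have hm'hom : IsHomog dF b m' := by
    intro j u hu
    rcases mem_support_sub hu with h | h
    · exact hhom j u h
    · rw [Finset.sum_apply] at h
      obtain ⟨i, -, hi⟩ := mem_support_sum h
      obtain ⟨a, ha, u', hu', rfl⟩ := exists_add_of_mem_support_mul hi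
      have e1 := (hp'supp i a ha).1
      have e2 := hf i j u' hu'
      rw [tdeg_add]
      omega
  have hm'eq : m' = (m - inForm ω ε m) - ∑ i, p' i • (f i - inForm ω ε (f i)) := by
    simp only [smul_sub, Finset.sum_sub_distrib]
    rw [key, hm'def]
    abel
  have hm'wt : ∀ j, ∀ u ∈ (m' j).support, wdeg ω u + ε j < W₀ := by
    intro j u hu
    rw [hm'eq] at hu
    rcases mem_support_sub hu with h | h
    · exact (support_sub_inForm h).2
    · rw [Finset.sum_apply] at h
      obtain ⟨i, -, hi⟩ := mem_support_sum h
      obtain ⟨a, ha, u', hu', rfl⟩ := exists_add_of_mem_support_mul hi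
      have e1 := (hp'supp i a ha).2
      have e2 := (support_sub_inForm hu').2
      rw [wdeg_add]
      omega
  by_cases hW0 : W₀ = 0
  · have hz : m' = 0 := by
      funext j
      refine MvPolynomial.support_eq_empty.1 (Finset.eq_empty_iff_forall_notMem.2
        fun u hu => ?_)
      have := hm'wt j u hu
      omega
    have heq : ∑ i, p' i • f i = m := by
      have hz' : m - ∑ i, p' i • f i = 0 := by rw [← hm'def]; exact hz
      exact (sub_eq_zero.1 hz').symm
    refine ⟨p', heq, fun i a ha => ⟨?_, (hp'supp i a ha).1⟩⟩
    rw [(hp'supp i a ha).2]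
    exact hW₀w
  · obtain ⟨q'', hq''eq, hq''supp⟩ := IH (W₀ - 1) (by omega) b hb m' hm'mem hm'hom
      (fun j u hu => by have := hm'wt j u hu; omega)
    refine ⟨fun i => p' i + q'' i, ?_, ?_⟩
    · simp only [add_smul, Finset.sum_add_distrib]
      rw [hq''eq, hm'def]
      abel
    · intro i a ha
      rcases mem_support_add ha with h | h
      · exact ⟨le_trans (le_of_eq (hp'supp i a h).2) hW₀w, (hp'supp i a h).1⟩
      · obtain ⟨h1, h2⟩ := hq''supp i a h
        exact ⟨by omega, h2⟩


lemma combo_apply {R : Type*} [CommRing R] {M : Type*} [AddCommGroup M] [Module R M]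
    {r : ℕ} (v : Fin r → M) (x : Fin r → R) : combo v x = ∑ i, x i • v i := rfl

/-- Claim A: if `g ∈ M` has a representation `g = ∑ hᵢ fᵢ` with all term weights
bounded by `W`, then `inForm g` lies in the module generated by the `inForm fᵢ`. -/
lemma claimA {K : Type*} [Field K] {n k : ℕ} (ω : Fin n → ℕ) (dF ε : Fin k → ℕ) {r s : ℕ}
    (f : Fin r → (Fin k → A K n)) (df : Fin r → ℕ)
    (hf : ∀ i, IsHomog dF (df i) (f i))
    (M : Submodule (A K n) (Fin k → A K n)) (hfM : ∀ i, f i ∈ M)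
    (Φ : (Fin s → A K n) →ₗ[A K n] (Fin r → A K n))
    (hΦ : LinearMap.range Φ = LinearMap.ker (combo fun i => inForm ω ε (f i)))
    (d : ℕ)
    (hgen : LinearMap.range Φ ≤ Submodule.span (A K n)
      {g | g ∈ LinearMap.range Φ ∧ ∃ b ≤ d, IsHomog df b g})
    (hagree : ∀ a ≤ d,
      Submodule.restrictScalars K
          (Submodule.span (A K n) (Set.range fun i => inForm ω ε (f i))) ⊓ homogSub dF a
        = Submodule.restrictScalars K (inMod ω ε M) ⊓ homogSub dF a) :
    ∀ W (g : Fin k → A K n) (h : Fin r → A K n), (∑ i, h i • f i = g) →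
      (∀ i, ∀ a ∈ (h i).support, wdeg ω a + maxWt ω ε (f i) ≤ W) → g ≠ 0 →
      inForm ω ε g ∈ Submodule.span (A K n) (Set.range fun i => inForm ω ε (f i)) := by
  intro W
  induction W using Nat.strong_induction_on with
  | _ W IH =>
  intro g h hsum hhsupp hg0
  set v : Fin r → A K n :=
    fun i => sel (fun a => wdeg ω a + maxWt ω ε (f i) = W) (h i) with hv
  have hvsupp : ∀ i, ∀ a ∈ (v i).support,
      a ∈ (h i).support ∧ wdeg ω a + maxWt ω ε (f i) = W :=
    fun i a ha => support_sel ha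
  have hfin_hom : ∀ i j, ∀ u ∈ (inForm ω ε (f i) j).support,
      wdeg ω u + ε j = maxWt ω ε (f i) := fun i j u hu => (support_inForm hu).2
  by_cases hV : ∑ i, v i • inForm ω ε (f i) = 0
  · -- the top-weight parts form a syzygy of the initial forms
    have hvker : v ∈ LinearMap.range Φ := by
      rw [hΦ]
      exact LinearMap.mem_ker.2 (by rw [combo_apply]; exact hV)
    obtain ⟨T, c, sg, hcs⟩ := Submodule.mem_span_set'.1 (hgen hvker)
    have hst_ker : ∀ t, ∑ i, (sg t : Fin r → A K n) i • inForm ω ε (f i) = 0 := by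
      intro t
      have h1 : (sg t : Fin r → A K n) ∈ LinearMap.range Φ := (sg t).2.1
      have h2 := LinearMap.mem_ker.1 (hΦ.le h1)
      rw [combo_apply] at h2
      exact h2
    have hst_hom := fun t => (sg t).2.2
    choose bt hbtd hbthom using hst_hom
    choose S hS using fun t =>
      weight_decomp ω (fun i => maxWt ω ε (f i)) (sg t : Fin r → A K n)
    set c' : Fin T → ℕ → A K n := fun t w => sel (fun a => wdeg ω a + w = W) (c t)
      with hc'
    have hσsupp : ∀ t w i, ∀ a ∈
        (selV (wdeg ω) (fun i => maxWt ω ε (f i)) w (sg t : Fin r → A K n) i).support,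
        a ∈ ((sg t : Fin r → A K n) i).support ∧ wdeg ω a + maxWt ω ε (f i) = w := by
      intro t w i a ha
      exact support_selV ha
    have hσker : ∀ t w, ∑ i,
        selV (wdeg ω) (fun i => maxWt ω ε (f i)) w (sg t : Fin r → A K n) i
          • inForm ω ε (f i) = 0 := by
      intro t w
      have e1 : selV (wdeg ω) ε w (∑ i, (sg t : Fin r → A K n) i • inForm ω ε (f i))
          = ∑ i, selV (wdeg ω) (fun i => maxWt ω ε (f i)) w (sg t : Fin r → A K n) i
              • inForm ω ε (f i) := by
        rw [selV_sum]
        exact Finset.sum_congr rfl fun i _ =>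
          selV_smul_homog (wdeg_add ω) (maxWt ω ε (f i)) _ _ (hfin_hom i)
      rw [hst_ker t, selV_zero] at e1
      exact e1.symm
    have hveq : v = ∑ t, ∑ w ∈ S t, c' t w •
        selV (wdeg ω) (fun i => maxWt ω ε (f i)) w (sg t : Fin r → A K n) := by
      have e0 : selV (wdeg ω) (fun i => maxWt ω ε (f i)) W v = v :=
        selV_eq_self fun i a ha => (hvsupp i a ha).2
      conv_lhs => rw [← e0, ← hcs]
      rw [selV_sum]
      refine Finset.sum_congr rfl fun t _ => ?_
      conv_lhs => rw [hS t]
      rw [Finset.smul_sum, selV_sum]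
      refine Finset.sum_congr rfl fun w _ => ?_
      exact selV_smul_homog (wdeg_add ω) w (c t) _ (fun i a ha => (hσsupp t w i a ha).2)
    have hvcomp : ∀ i, v i = ∑ t, ∑ w ∈ S t, c' t w *
        selV (wdeg ω) (fun i => maxWt ω ε (f i)) w (sg t : Fin r → A K n) i := by
      intro i
      have h1 := congrFun hveq i
      simpa only [Finset.sum_apply, Pi.smul_apply, smul_eq_mul] using h1
    have hq : ∀ t w, ∃ qq : Fin r → A K n,
        (∑ i, qq i • f i = ∑ i,
          selV (wdeg ω) (fun i => maxWt ω ε (f i)) w (sg t : Fin r → A K n) i • f i) ∧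
        ∀ i, ∀ a ∈ (qq i).support, wdeg ω a + maxWt ω ε (f i) < w := by
      intro t w
      by_cases hmz : (∑ i,
          selV (wdeg ω) (fun i => maxWt ω ε (f i)) w (sg t : Fin r → A K n) i • f i) = 0
      · exact ⟨0, by rw [hmz]; simp, by simp⟩
      · have hmeq : (∑ i,
            selV (wdeg ω) (fun i => maxWt ω ε (f i)) w (sg t : Fin r → A K n) i • f i)
            = ∑ i, selV (wdeg ω) (fun i => maxWt ω ε (f i)) w (sg t : Fin r → A K n) i
                • (f i - inForm ω ε (f i)) := by
          simp only [smul_sub, Finset.sum_sub_distrib, hσker t w, sub_zero]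
        have hmwt : ∀ j, ∀ u ∈ ((∑ i,
            selV (wdeg ω) (fun i => maxWt ω ε (f i)) w (sg t : Fin r → A K n) i • f i)
              j).support, wdeg ω u + ε j < w := by
          intro j u hu
          rw [hmeq, Finset.sum_apply] at hu
          obtain ⟨i, -, hi⟩ := mem_support_sum hu
          obtain ⟨a, ha, u', hu', rfl⟩ := exists_add_of_mem_support_mul hi
          have e1 := (hσsupp t w i a ha).2
          have e2 := (support_sub_inForm hu').2
          rw [wdeg_add]
          omega
        have hw1 : 1 ≤ w := by
          obtain ⟨j, hj⟩ := Function.ne_iff.1 hmz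
          rw [Pi.zero_apply] at hj
          obtain ⟨u, hu⟩ := MvPolynomial.ne_zero_iff.1 hj
          have := hmwt j u (MvPolynomial.mem_support_iff.2 hu)
          omega
        have hmmem : (∑ i,
            selV (wdeg ω) (fun i => maxWt ω ε (f i)) w (sg t : Fin r → A K n) i • f i)
              ∈ M :=
          Submodule.sum_mem M fun i _ => Submodule.smul_mem M _ (hfM i)
        have hmhom : IsHomog dF (bt t) (∑ i,
            selV (wdeg ω) (fun i => maxWt ω ε (f i)) w (sg t : Fin r → A K n) i • f i)
            := by
          intro j u hu
          rw [Finset.sum_apply] at hu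
          obtain ⟨i, -, hi⟩ := mem_support_sum hu
          obtain ⟨a, ha, u', hu', rfl⟩ := exists_add_of_mem_support_mul hi
          have e1 := hbthom t i a (hσsupp t w i a ha).1
          have e2 := hf i j u' hu'
          rw [tdeg_add]
          omega
        obtain ⟨qq, hqq1, hqq2⟩ := claimB ω dF ε f df hf M hfM d hagree (w - 1) (bt t)
          (hbtd t) _ hmmem hmhom (fun j u hu => by have := hmwt j u hu; omega)
        exact ⟨qq, hqq1, fun i a ha => by have := (hqq2 i a ha).1; omega⟩
    choose q hq1 hq2 using hq
    set h' : Fin r → A K n :=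
      fun i => (h i - v i) + ∑ t, ∑ w ∈ S t, c' t w * q t w i with hh'
    have left : ∑ i, (∑ t, ∑ w ∈ S t, c' t w * q t w i) • f i
        = ∑ t, ∑ w ∈ S t, c' t w • (∑ i, q t w i • f i) := by
      simp only [Finset.sum_smul, mul_smul]
      rw [Finset.sum_comm]
      refine Finset.sum_congr rfl fun t _ => ?_
      rw [Finset.sum_comm]
      exact Finset.sum_congr rfl fun w _ => (Finset.smul_sum).symm
    have right : ∑ i, v i • f i
        = ∑ t, ∑ w ∈ S t, c' t w • (∑ i,
            selV (wdeg ω) (fun i => maxWt ω ε (f i)) w (sg t : Fin r → A K n) i • f i)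
          := by
      have e1 : ∑ i, v i • f i = ∑ i, (∑ t, ∑ w ∈ S t, c' t w *
          selV (wdeg ω) (fun i => maxWt ω ε (f i)) w (sg t : Fin r → A K n) i) • f i :=
        Finset.sum_congr rfl fun i _ => by rw [← hvcomp i]
      rw [e1]
      simp only [Finset.sum_smul, mul_smul]
      rw [Finset.sum_comm]
      refine Finset.sum_congr rfl fun t _ => ?_
      rw [Finset.sum_comm]
      exact Finset.sum_congr rfl fun w _ => (Finset.smul_sum).symm
    have key2 : ∑ i, (∑ t, ∑ w ∈ S t, c' t w * q t w i) • f i = ∑ i, v i • f i := by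
      rw [left, right]
      exact Finset.sum_congr rfl fun t _ => Finset.sum_congr rfl fun w _ => by
        rw [hq1 t w]
    have hsum' : ∑ i, h' i • f i = g := by
      simp only [hh', add_smul, sub_smul, Finset.sum_add_distrib, Finset.sum_sub_distrib]
      rw [key2, hsum]
      abel
    have hsupp' : ∀ i, ∀ a ∈ (h' i).support, wdeg ω a + maxWt ω ε (f i) < W := by
      intro i a ha
      simp only [hh'] at ha
      rcases mem_support_add ha with h1 | h1
      · have hc : (h i - v i).coeff a ≠ 0 := MvPolynomial.mem_support_iff.1 h1
        rw [MvPolynomial.coeff_sub] at hc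
        by_cases hP : wdeg ω a + maxWt ω ε (f i) = W
        · rw [hv, coeff_sel, if_pos hP] at hc
          simp at hc
        · have ha' : a ∈ (h i).support := by
            rw [hv, coeff_sel, if_neg hP, sub_zero] at hc
            exact MvPolynomial.mem_support_iff.2 hc
          have := hhsupp i a ha'
          omega
      · obtain ⟨t, -, ht⟩ := mem_support_sum h1
        obtain ⟨w, hwS, hw⟩ := mem_support_sum ht
        obtain ⟨a1, ha1, a2, ha2, rfl⟩ := exists_add_of_mem_support_mul hw
        have e1 := (support_sel ha1).2
        have e2 := hq2 t w i a2 ha2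
        rw [wdeg_add]
        omega
    by_cases hW : W = 0
    · exfalso
      apply hg0
      rw [← hsum']
      have hzero : ∀ i, h' i = 0 := fun i =>
        MvPolynomial.support_eq_empty.1 (Finset.eq_empty_iff_forall_notMem.2
          fun a ha => by have := hsupp' i a ha; omega)
      simp [hzero]
    · exact IH (W - 1) (by omega) g h' hsum'
        (fun i a ha => by have := hsupp' i a ha; omega) hg0
  · -- the top-weight part of `g` is `∑ vᵢ • inForm fᵢ`
    have hfsupp : ∀ i j, ∀ u ∈ (f i j).support, wdeg ω u + ε j ≤ maxWt ω ε (f i) :=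
      fun i j u hu => wt_le_maxWt ω ε (f i) hu
    have hgW : ∀ j, ∀ u ∈ (g j).support, wdeg ω u + ε j ≤ W := by
      intro j u hu
      rw [← hsum, Finset.sum_apply] at hu
      obtain ⟨i, -, hi⟩ := mem_support_sum hu
      obtain ⟨a, ha, u', hu', rfl⟩ := exists_add_of_mem_support_mul hi
      have e1 := hhsupp i a ha
      have e2 := hfsupp i j u' hu'
      rw [wdeg_add]
      omega
    have hsel : selV (wdeg ω) ε W g = ∑ i, v i • inForm ω ε (f i) := by
      conv_lhs => rw [← hsum]
      rw [selV_sum]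
      refine Finset.sum_congr rfl fun i _ => ?_
      rw [selV_smul_top ω ε (maxWt ω ε (f i)) W (h i) (f i) (hhsupp i) (hfsupp i),
        ← inForm_eq_selV]
    have hle : maxWt ω ε g ≤ W := maxWt_le hgW
    have hge : W ≤ maxWt ω ε g := by
      have hne : selV (wdeg ω) ε W g ≠ 0 := by rw [hsel]; exact hV
      obtain ⟨j, hj⟩ := Function.ne_iff.1 hne
      rw [Pi.zero_apply] at hj
      obtain ⟨u, hu⟩ := MvPolynomial.ne_zero_iff.1 hj
      have hu' : u ∈ (selV (wdeg ω) ε W g j).support := MvPolynomial.mem_support_iff.2 hu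
      obtain ⟨hu1, hu2⟩ := support_selV hu'
      have := wt_le_maxWt ω ε g hu1
      omega
    have hin : inForm ω ε g = ∑ i, v i • inForm ω ε (f i) := by
      rw [inForm_eq_selV, le_antisymm hle hge, hsel]
    rw [hin]
    exact Submodule.sum_mem _ fun i _ =>
      Submodule.smul_mem _ _ (Submodule.subset_span ⟨i, rfl⟩)

end MainLemmas

/-- **Corollary: agreement up to the syzygy degree bound.**
Let `M ⊆ F` be graded, generated by homogeneous `f_1,…,f_r` of degrees `df i`,
and let `A^s →^Φ A^r → F` be a graded presentation of
`N = ⟨in(f_1),…,in(f_r)⟩` with `Φ(A^s)` generated in degrees `≤ d`. If `N` and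
`in_{(ω,ε)}(M)` agree in all degrees `≤ d`, then `N = in_{(ω,ε)}(M)`. -/
theorem initial_module_agreement_in_low_degrees
    {K : Type*} [Field K] {n k : ℕ} (ω : Fin n → ℕ) (dF ε : Fin k → ℕ) {r s : ℕ}
    (f : Fin r → (Fin k → A K n)) (df : Fin r → ℕ)
    (hf : ∀ i, IsHomog dF (df i) (f i))
    (M : Submodule (A K n) (Fin k → A K n))
    (hMgen : M = Submodule.span (A K n) (Set.range f))
    (Φ : (Fin s → A K n) →ₗ[A K n] (Fin r → A K n))
    (hΦ : LinearMap.range Φ = LinearMap.ker (combo fun i => inForm ω ε (f i)))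
    (d : ℕ)
    (hgen : LinearMap.range Φ ≤ Submodule.span (A K n)
      {g | g ∈ LinearMap.range Φ ∧ ∃ b ≤ d, IsHomog df b g})
    (hagree : ∀ a ≤ d,
      Submodule.restrictScalars K
          (Submodule.span (A K n) (Set.range fun i => inForm ω ε (f i))) ⊓ homogSub dF a
        = Submodule.restrictScalars K (inMod ω ε M) ⊓ homogSub dF a) :
    Submodule.span (A K n) (Set.range fun i => inForm ω ε (f i)) = inMod ω ε M := by
  have hfM : ∀ i, f i ∈ M := fun i => hMgen ▸ Submodule.subset_span ⟨i, rfl⟩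
  apply le_antisymm
  · rw [Submodule.span_le]
    rintro x ⟨i, rfl⟩
    by_cases h0 : f i = 0
    · show inForm ω ε (f i) ∈ inMod ω ε M
      rw [h0, inForm_zero]
      exact Submodule.zero_mem _
    · exact Submodule.subset_span ⟨f i, hfM i, h0, rfl⟩
  · rw [inMod, Submodule.span_le]
    rintro x ⟨g', hg'M, hg'0, rfl⟩
    obtain ⟨h, hh⟩ := (Submodule.mem_span_range_iff_exists_fun (A K n)).1
      (by rw [← hMgen]; exact hg'M)
    exact claimA ω dF ε f df hf M hfM Φ hΦ d hgen hagree
      (Finset.univ.sup fun i => (h i).support.sup fun a => wdeg ω a + maxWt ω ε (f i))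
      g' h hh
      (fun i a ha =>
        le_trans (Finset.le_sup (f := fun a => wdeg ω a + maxWt ω ε (f i)) ha)
          (Finset.le_sup
            (f := fun i => (h i).support.sup fun a => wdeg ω a + maxWt ω ε (f i))
            (Finset.mem_univ i))) hg'0

end CregPaper
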